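/- Fix n ≥ 1, 1 ≤ i ≤ n, and signs ε = (ε_0,…,ε_n) ∈ {±1}^{n+1}; let σ_ε(x_1,…,x_n) = (ε_1x_1,…,ε_nx_n) and set f_i^ε(x) := ε_0 · h_i(σ_ε x)². Define S_{ε_0} : ℝ × ℝⁿ × ℝⁿ → ℝ × ℝⁿ × ℝⁿ by S_{ε_0}(x_0, x, p) = (x_0 − ε_0 p_1²/4, x_1 + ε_0 p_1/2, x_2, …, x_n, p_1, …, p_n). Let Λ_i^ε := {(f_i^ε(x), x, −∇f_i^ε(x)) : x ∈ ℝⁿ with ε_{k−1}ε_k h_{i,k−1}(σ_ε x) ≤ 0 for k = 1,…,i}, and let L_i^{ε'} := {(x, t·∇g(x)) : t ≥ 0, x ∈ ℝⁿ with g(x) = 0 and ε_k ε_{k+1} h_{i−k}(ε_{k+1}x_{k+1},…,ε_ix_i) ≤ 0 for k = 1,…,i−1}, where g(x) := x_1 − ε_1 · h_{i−1}(ε_2x_2,…,ε_ix_i)² (the positive conormal of the hypersurface {g = 0} restricted to the quadrant). Then S_{ε_0}(Λ_i^ε) = {0} × L_i^{ε'}, and S_{ε_0} restricts to a bijection from Λ_i^ε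 onto {0} × L_i^{ε'}. In particular Λ_i^ε is independent of the sign ε_0 up to this identification. -/

import Mathlib

open scoped ContDiff

noncomputable section

/-- The polynomial `h_i` in the variables `x_1, …, x_i` (0-indexed: it depends on
coordinates `0, …, i-1`): `h_0 = 0`, `h_{i+1}(x) = x 0 - (h_i (x ∘ (·+1)))^2`. -/
def hpoly : ℕ → (ℕ → ℝ) → ℝ
  | 0, _ => 0
  | i + 1, x => x 0 - (hpoly i fun k => x (k + 1)) ^ 2

/-- Extension of a vector of `ℝⁿ` by zeros to an infinite sequence. -/
def extv {n : ℕ} (x : Fin n → ℝ) : ℕ → ℝ := fun k => if h : k < n then x ⟨k, h⟩ else 0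

/-- `h_{i,j}` as a function on `ℝⁿ` (0-indexed: it depends on coordinates `j, …, i-1`;
in the paper's notation `h_{i,j}(x) = h_{i-j}(x_{j+1}, …, x_i)`). -/
def hh (n i j : ℕ) (x : Fin n → ℝ) : ℝ := hpoly (i - j) fun k => extv x (j + k)

/-- The gradient of a function on `ℝⁿ`, via the Fréchet derivative. -/
def grad {n : ℕ} (f : (Fin n → ℝ) → ℝ) (x : Fin n → ℝ) : Fin n → ℝ :=
  fun k => fderiv ℝ f x (Pi.single k 1)

/-- The `m`-th standard basis vector of `ℝⁿ` (zero if `m ≥ n`). -/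
def evec (n m : ℕ) : Fin n → ℝ := fun k => if (k : ℕ) = m then 1 else 0

/-!
Put `F := h_i ∘ σ_ε`. Then `F x = ε₁ x₁ - h_{i,1}(σ_ε x)²`, so `F` is affine of slope `ε₁` along
the `x₁`-axis and its gradient is invariant under translation along that axis; moreover
`f = ε₀ F²`, `g = ε₁ F` and `∇f = 2 ε₀ F ∇F`. Hence `S` sends the 1-jet of `f` at `x` to
`(0, x - ε₁ F(x) e₁, -2 ε₀ ε₁ F(x) ∇g(x - ε₁ F(x) e₁))`, whose base point lies on `{g = 0}`; the
factor in front of `∇g` is nonnegative exactly when the first sign condition `ε₀ ε₁ F(x) ≤ 0`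
of `Λ` holds, and the other sign conditions only involve `x₂, …, xₙ`. Injectivity holds because
`S` is a shear.
-/

open Function

section Polynomials

lemma differentiable_hpoly {E : Type*} [NormedAddCommGroup E] [NormedSpace ℝ E] (m : ℕ)
    {u : ℕ → E → ℝ} (hu : ∀ k, Differentiable ℝ (u k)) :
    Differentiable ℝ fun x => hpoly m fun k => u k x := by
  induction m generalizing u with
  | zero => simp only [hpoly]; fun_prop
  | succ m ih => exact (hu 0).sub ((ih fun k => hu (k + 1)).pow 2)

variable {n : ℕ}

lemma differentiable_extv (k : ℕ) : Differentiable ℝ fun y : Fin n → ℝ => extv y k := by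
  by_cases hk : k < n
  · simp only [extv, dif_pos hk]; fun_prop
  · simp only [extv, dif_neg hk]; fun_prop

lemma differentiable_hh (i j : ℕ) : Differentiable ℝ (hh n i j) :=
  differentiable_hpoly (i - j) fun k => differentiable_extv (j + k)

lemma extv_add_single_of_ne (y : Fin n → ℝ) (k : Fin n) (s : ℝ) {m : ℕ} (hm : m ≠ k) :
    extv (y + Pi.single k s) m = extv y m := by
  unfold extv
  split_ifs with h
  · rw [Pi.add_apply, Pi.single_eq_of_ne (Fin.ne_of_val_ne hm), add_zero]
  · rfl

lemma hh_of_lt {i j : ℕ} (hj : j < i) (y : Fin n → ℝ) :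
    hh n i j y = extv y j - hh n i (j + 1) y ^ 2 := by
  obtain ⟨d, hd⟩ : ∃ d, i - j = d + 1 := ⟨i - j - 1, by omega⟩
  simp only [hh, hd, hpoly, show i - (j + 1) = d by omega, add_zero, add_assoc, add_comm 1]

lemma hh_add_single_of_pos (hn : 0 < n) {i j : ℕ} (hj : 1 ≤ j) (y : Fin n → ℝ) (s : ℝ) :
    hh n i j (y + Pi.single ⟨0, hn⟩ s) = hh n i j y := by
  simp only [hh]
  congr 1
  funext k
  exact extv_add_single_of_ne y _ s (by simp; omega)

lemma hh_zero_eq (hn : 0 < n) {i : ℕ} (hi : 0 < i) (y : Fin n → ℝ) :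
    hh n i 0 y = y ⟨0, hn⟩ - hh n i 1 y ^ 2 := by
  rw [hh_of_lt hi]
  simp [extv, hn]

lemma hh_zero_add_single (hn : 0 < n) {i : ℕ} (hi : 0 < i) (y : Fin n → ℝ) (s : ℝ) :
    hh n i 0 (y + Pi.single ⟨0, hn⟩ s) = hh n i 0 y + s := by
  rw [hh_zero_eq hn hi, hh_zero_eq hn hi, hh_add_single_of_pos hn le_rfl]
  simp only [Pi.add_apply, Pi.single_eq_same]
  ring

end Polynomials

section AffineAlongCoordinate

variable {n : ℕ} {F : (Fin n → ℝ) → ℝ} {k : Fin n} {a : ℝ}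

lemma grad_add_single (hF : ∀ x s, F (x + Pi.single k s) = F x + a * s) (x : Fin n → ℝ)
    (s : ℝ) : grad F (x + Pi.single k s) = grad F x := by
  have hshift : (fun y => F (y + Pi.single k s)) = fun y => F y + a * s := funext fun y => hF y s
  funext j
  rw [grad, ← fderiv_comp_add_right, hshift, fderiv_add_const, grad]

lemma grad_apply_self (hF : ∀ x s, F (x + Pi.single k s) = F x + a * s) {x : Fin n → ℝ}
    (hx : DifferentiableAt ℝ F x) : grad F x k = a := by
  have hline : (fun t : ℝ => F (x + t • Pi.single k 1)) = fun t => F x + a * t := by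
    funext t
    rw [← Pi.single_smul', smul_eq_mul, mul_one, hF]
  rw [grad, ← hx.lineDeriv_eq_fderiv, lineDeriv, hline]
  simp

end AffineAlongCoordinate

section Gradients

variable {n : ℕ} {F : (Fin n → ℝ) → ℝ} {x : Fin n → ℝ}

lemma grad_const_mul (hx : DifferentiableAt ℝ F x) (c : ℝ) :
    grad (fun y => c * F y) x = fun j => c * grad F x j := by
  funext j
  rw [grad, fderiv_const_mul hx]
  rfl

lemma grad_const_mul_sq (hx : DifferentiableAt ℝ F x) (c : ℝ) :
    grad (fun y => c * F y ^ 2) x = fun j => 2 * c * F x * grad F x j := by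
  funext j
  have hsq : DifferentiableAt ℝ (fun y => F y ^ 2) x := hx.pow 2
  rw [grad, fderiv_const_mul hsq, fderiv_fun_pow 2 hx]
  simp only [grad, FunLike.coe_smul, Pi.smul_apply, smul_eq_mul, nsmul_eq_mul]
  ring

end Gradients

section ContactShift

variable {n : ℕ}

def contactShift (c : ℝ) (k : Fin n) (z : ℝ × (Fin n → ℝ) × (Fin n → ℝ)) :
    ℝ × (Fin n → ℝ) × (Fin n → ℝ) :=
  (z.1 - c * z.2.2 k ^ 2 / 4, update z.2.1 k (z.2.1 k + c * z.2.2 k / 2), z.2.2)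

def legendrianLift (f : (Fin n → ℝ) → ℝ) (P : (Fin n → ℝ) → Prop) :
    Set (ℝ × (Fin n → ℝ) × (Fin n → ℝ)) :=
  {z | ∃ x, P x ∧ z = (f x, x, fun k => -grad f x k)}

def positiveConormal (g : (Fin n → ℝ) → ℝ) (Q : (Fin n → ℝ) → Prop) :
    Set ((Fin n → ℝ) × (Fin n → ℝ)) :=
  {w | ∃ x t, 0 ≤ t ∧ g x = 0 ∧ Q x ∧ w = (x, fun k => t * grad g x k)}

lemma contactShift_injective (c : ℝ) (k : Fin n) : Injective (contactShift c k) := by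
  rintro ⟨u, x, p⟩ ⟨u', x', p'⟩ h
  simp only [contactShift, Prod.mk.injEq] at h
  obtain ⟨hu, hx, rfl⟩ := h
  have hxk : x k = x' k := by simpa using congrFun hx k
  have hx' : x = x' := by
    funext j
    rcases eq_or_ne j k with rfl | hj
    · exact hxk
    · simpa [hj] using congrFun hx j
  subst hx'
  simp_all

lemma update_add_eq_add_single (x : Fin n → ℝ) (k : Fin n) (s : ℝ) :
    update x k (x k + s) = x + Pi.single k s := by
  funext j
  rcases eq_or_ne j k with rfl | hj <;> simp [*]

variable {F : (Fin n → ℝ) → ℝ} {k : Fin n} {a c : ℝ}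

lemma contactShift_legendrianLift_point (hF : ∀ x s, F (x + Pi.single k s) = F x + a * s)
    (hdF : Differentiable ℝ F) (hc : c ^ 2 = 1) (ha : a ^ 2 = 1) (x : Fin n → ℝ) :
    contactShift c k (c * F x ^ 2, x, fun j => -grad (fun y => c * F y ^ 2) x j) =
      (0, x + Pi.single k (-(a * F x)), fun j =>
        -(2 * c * a * F x) * grad (fun y => a * F y) (x + Pi.single k (-(a * F x))) j) := by
  have hk : grad F x k = a := grad_apply_self hF (hdF x)
  simp only [grad_const_mul_sq (hdF x), grad_const_mul (hdF _), grad_add_single hF]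
  simp only [contactShift, hk, ← update_add_eq_add_single, Prod.mk.injEq]
  refine ⟨?_, ?_, ?_⟩
  · linear_combination (-(c * a ^ 2 * F x ^ 2)) * hc - c * F x ^ 2 * ha
  · congr 1
    linear_combination (-(a * F x)) * hc
  · funext j
    linear_combination (2 * c * F x * grad F x j) * ha

theorem contactShift_image_legendrianLift {P Q : (Fin n → ℝ) → Prop}
    (hF : ∀ x s, F (x + Pi.single k s) = F x + a * s)
    (hdF : Differentiable ℝ F) (hc : c ^ 2 = 1) (ha : a ^ 2 = 1)
    (hQ : ∀ x s, Q (x + Pi.single k s) ↔ Q x) (hP : ∀ x, P x ↔ c * a * F x ≤ 0 ∧ Q x) :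
    contactShift c k '' legendrianLift (fun x => c * F x ^ 2) P =
      {z | z.1 = 0 ∧ z.2 ∈ positiveConormal (fun x => a * F x) Q} := by
  ext z
  constructor
  · rintro ⟨-, ⟨x, hPx, rfl⟩, rfl⟩
    rw [contactShift_legendrianLift_point hF hdF hc ha]
    obtain ⟨hsign, hQx⟩ := (hP x).1 hPx
    refine ⟨rfl, _, _, by linarith, ?_, (hQ x _).2 hQx, rfl⟩
    show a * F (x + _) = 0
    rw [hF]
    linear_combination (-(a * F x)) * ha
  · rintro ⟨hz, x, t, ht, hFx, hQx, hzx⟩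
    have hFx0 : F x = 0 := by
      simpa [show a ≠ 0 by rintro rfl; norm_num at ha] using hFx
    set y := x + Pi.single k (-(c * t / 2))
    have hFy : F y = -(a * c * t / 2) := by rw [hF, hFx0]; ring
    have hback : y + Pi.single k (-(a * F y)) = x := by
      have hcancel : -(c * t / 2) + -(a * -(a * c * t / 2)) = 0 := by
        linear_combination (c * t / 2) * ha
      rw [hFy, add_assoc, ← Pi.single_add, hcancel, Pi.single_zero, add_zero]
    refine ⟨_, ⟨y, (hP y).2 ⟨?_, (hQ x _).2 hQx⟩, rfl⟩, ?_⟩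
    · have hsign : c * a * F y = -(t / 2) := by
        rw [hFy]
        linear_combination (-(t * a ^ 2 / 2)) * hc - t / 2 * ha
      linarith
    · rw [contactShift_legendrianLift_point hF hdF hc ha, hback]
      refine Prod.ext hz.symm (hzx.trans ?_).symm
      congr
      funext j
      rw [hFy]
      congr 1
      linear_combination (-(t * a ^ 2)) * hc - t * ha

end ContactShift

section DiagonalScaling

variable {n : ℕ} {σ : (Fin n → ℝ) → Fin n → ℝ} {c : Fin n → ℝ}

lemma diag_add_single (hσ : ∀ x j, σ x j = c j * x j) (x : Fin n → ℝ) (k : Fin n) (s : ℝ) :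
    σ (x + Pi.single k s) = σ x + Pi.single k (c k * s) := by
  funext j
  rcases eq_or_ne j k with rfl | hj <;> simp [*, mul_add]

lemma differentiable_diag (hσ : ∀ x j, σ x j = c j * x j) : Differentiable ℝ σ := by
  obtain rfl : σ = fun x j => c j * x j := funext fun x => funext (hσ x)
  fun_prop

end DiagonalScaling

/-- Fix `n ≥ 1`, `1 ≤ i ≤ n`, signs `ε ∈ {±1}^{n+1}`, and set
`f_i^ε(x) = ε_0 h_i(σ_ε x)²`, `S_{ε_0}(x_0, x, p) = (x_0 - ε_0 p_1²/4, x_1 + ε_0 p_1/2, …, p)`.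
Let `Λ_i^ε = {(f_i^ε(x), x, -∇f_i^ε(x)) : ε_{k-1}ε_k h_{i,k-1}(σ_ε x) ≤ 0 (k = 1, …, i)}` and
`L_i^{ε'} = {(x, t∇g(x)) : t ≥ 0, g(x) = 0, ε_kε_{k+1} h_{i,k}(σ_ε x) ≤ 0 (k = 1, …, i-1)}`
where `g(x) = x_1 - ε_1 h_{i,1}(σ_ε x)²`.  Then `S_{ε_0}(Λ_i^ε) = {0} × L_i^{ε'}` and `S_{ε_0}`
restricts to a bijection from `Λ_i^ε` onto it.  (The paper's `x_1, p_1` are coordinates `0`.) -/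
theorem stmt_6 (n i : ℕ) (hn : 1 ≤ n) (hi1 : 1 ≤ i) (hin : i ≤ n)
    (ε : Fin (n + 1) → ℝ) (hε : ∀ k, ε k = 1 ∨ ε k = -1)
    (σ : (Fin n → ℝ) → (Fin n → ℝ))
    (hσ : ∀ x j, σ x j = ε ⟨(j : ℕ) + 1, Nat.succ_lt_succ j.isLt⟩ * x j)
    (f g : (Fin n → ℝ) → ℝ)
    (hf : ∀ x, f x = ε 0 * (hh n i 0 (σ x)) ^ 2)
    (hg : ∀ x, g x = x ⟨0, hn⟩ - ε ⟨1, Nat.succ_lt_succ hn⟩ * (hh n i 1 (σ x)) ^ 2)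
    (S : ℝ × (Fin n → ℝ) × (Fin n → ℝ) → ℝ × (Fin n → ℝ) × (Fin n → ℝ))
    (hS : ∀ z, S z =
      (z.1 - ε 0 * (z.2.2 ⟨0, hn⟩) ^ 2 / 4,
       Function.update z.2.1 ⟨0, hn⟩ (z.2.1 ⟨0, hn⟩ + ε 0 * z.2.2 ⟨0, hn⟩ / 2),
       z.2.2))
    (Λ : Set (ℝ × (Fin n → ℝ) × (Fin n → ℝ)))
    (hΛ : Λ = {z | ∃ x : Fin n → ℝ,
      (∀ j : ℕ, ∀ hj : j < i,
        ε ⟨j, Nat.lt_succ_of_lt (lt_of_lt_of_le hj hin)⟩ *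
          ε ⟨j + 1, Nat.succ_lt_succ (lt_of_lt_of_le hj hin)⟩ * hh n i j (σ x) ≤ 0) ∧
      z = (f x, x, fun k => - grad f x k)})
    (L : Set ((Fin n → ℝ) × (Fin n → ℝ)))
    (hL : L = {w | ∃ x : Fin n → ℝ, ∃ t : ℝ, 0 ≤ t ∧ g x = 0 ∧
      (∀ j : ℕ, 1 ≤ j → ∀ hj : j < i,
        ε ⟨j, Nat.lt_succ_of_lt (lt_of_lt_of_le hj hin)⟩ *
          ε ⟨j + 1, Nat.succ_lt_succ (lt_of_lt_of_le hj hin)⟩ * hh n i j (σ x) ≤ 0) ∧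
      w = (x, fun k => t * grad g x k)}) :
    S '' Λ = {z | z.1 = 0 ∧ z.2 ∈ L} ∧ Set.InjOn S Λ := by
  set e₁ := ε ⟨1, Nat.succ_lt_succ hn⟩
  have hsq : ∀ k, ε k ^ 2 = 1 := fun k => by rcases hε k with h | h <;> simp [h]
  have he₁ : e₁ ^ 2 = 1 := hsq _
  set F : (Fin n → ℝ) → ℝ := fun x => hh n i 0 (σ x)
  have hF : ∀ x s, F (x + Pi.single ⟨0, hn⟩ s) = F x + e₁ * s := fun x s => by
    simp only [F, diag_add_single hσ, hh_zero_add_single hn hi1]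
    rfl
  have hdF : Differentiable ℝ F := (differentiable_hh i 0).comp (differentiable_diag hσ)
  obtain rfl : f = fun x => ε 0 * F x ^ 2 := funext hf
  obtain rfl : g = fun x => e₁ * F x := funext fun x => by
    rw [hg, show e₁ * F x = e₁ * hh n i 0 (σ x) from rfl, hh_zero_eq hn hi1, hσ]
    linear_combination (-x ⟨0, hn⟩) * he₁
  obtain rfl : S = contactShift (ε 0) ⟨0, hn⟩ := funext hS
  subst hΛ hL
  refine ⟨contactShift_image_legendrianLift hF hdF (hsq 0) he₁ (fun x s => ?_) (fun x => ?_),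
    (contactShift_injective _ _).injOn⟩
  · simp only [diag_add_single hσ]
    exact forall_congr' fun j => forall_congr' fun hj => by rw [hh_add_single_of_pos hn hj]
  · refine ⟨fun h => ⟨h 0 hi1, fun j _ hj => h j hj⟩, fun ⟨h0, h⟩ j hj => ?_⟩
    rcases Nat.eq_zero_or_pos j with rfl | hpos
    exacts [h0, h j hpos hj]
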